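/- Fix n ≥ 2 and, for k : Fin n and j : ℕ with j ≥ 1, define P(k,j) in MvPolynomial (Fin n) ℝ by P(k,j) = (X k)^(j+1) + (((∑ i, X i)^j - (X k)^j) - 1) * (X k). The trace of the square Ouroboros matrix is defined as the product of its diagonal entries, tr(M_{n²}) = ∏_{i=1}^{n} P(i,i) (where the diagonal entry in row i uses iteration index j = i). Then the total degree of this product equals (n^2 + 3n)/2. -/
import Mathlib


open MvPolynomial

theorem ouroboros_trace_totalDegree (n : ℕ) (hn : 2 ≤ n) :
    (∏ i : Fin n,
      ((X i : MvPolynomial (Fin n) ℝ) ^ ((i : ℕ) + 1 + 1)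
        + (((∑ l, X l) ^ ((i : ℕ) + 1) - (X i) ^ ((i : ℕ) + 1)) - 1)
          * (X i))).totalDegree = (n ^ 2 + 3 * n) / 2 := by
  set P : Fin n → MvPolynomial (Fin n) ℝ := fun i =>
    (X i) ^ ((i : ℕ) + 1 + 1)
      + (((∑ l, X l) ^ ((i : ℕ) + 1) - (X i) ^ ((i : ℕ) + 1)) - 1) * X i with hP
  have key : ∑ i : Fin n, ((i : ℕ) + 2) = (n ^ 2 + 3 * n) / 2 := by
    have h1 : (∑ i ∈ Finset.range n, i) * 2 = n * (n - 1) :=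
      Finset.sum_range_id_mul_two n
    have h2 : ∑ i : Fin n, ((i : ℕ) + 2) = (∑ i ∈ Finset.range n, i) + 2 * n := by
      rw [Fin.sum_univ_eq_sum_range (fun i => i + 2) n, Finset.sum_add_distrib,
        Finset.sum_const, Finset.card_range, smul_eq_mul, mul_comm]
    have h3 : n ^ 2 + 3 * n = ((∑ i ∈ Finset.range n, i) + 2 * n) * 2 := by
      have h1' : ((∑ i ∈ Finset.range n, i) : ℤ) * 2 = (n : ℤ) * ((n : ℤ) - 1) := by
        have := h1
        zify [show 1 ≤ n by omega] at this
        linarith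
      zify
      linear_combination -h1'
    rw [h2, h3, Nat.mul_div_cancel _ (by norm_num)]
  apply le_antisymm
  · calc (∏ i, P i).totalDegree ≤ ∑ i, (P i).totalDegree :=
          totalDegree_finset_prod _ _
      _ ≤ ∑ i : Fin n, ((i : ℕ) + 2) := by
          refine Finset.sum_le_sum fun i _ => ?_
          have hS : (∑ l, (X l : MvPolynomial (Fin n) ℝ)).totalDegree ≤ 1 := by
            refine (totalDegree_finset_sum _ _).trans ?_
            exact Finset.sup_le fun l _ => le_of_eq (totalDegree_X l)
          have h1 : ((∑ l, (X l : MvPolynomial (Fin n) ℝ)) ^ ((i : ℕ) + 1)).totalDegree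
              ≤ (i : ℕ) + 1 := by
            refine (totalDegree_pow _ _).trans ?_
            calc ((i : ℕ) + 1) * (∑ l, (X l : MvPolynomial (Fin n) ℝ)).totalDegree
                ≤ ((i : ℕ) + 1) * 1 := Nat.mul_le_mul_left _ hS
              _ = (i : ℕ) + 1 := by ring
          have h2 : ((X i : MvPolynomial (Fin n) ℝ) ^ ((i : ℕ) + 1)).totalDegree
              ≤ (i : ℕ) + 1 := le_of_eq (totalDegree_X_pow _ _)
          refine (totalDegree_add _ _).trans ?_
          refine max_le (le_of_eq (totalDegree_X_pow _ _)) ?_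
          refine (totalDegree_mul _ _).trans ?_
          have : ((((∑ l, X l) ^ ((i : ℕ) + 1) - (X i) ^ ((i : ℕ) + 1)) - 1 :
              MvPolynomial (Fin n) ℝ)).totalDegree ≤ (i : ℕ) + 1 := by
            refine (totalDegree_sub _ _).trans ?_
            refine max_le ((totalDegree_sub _ _).trans (max_le h1 h2)) ?_
            simp [totalDegree_one]
          calc _ ≤ ((i : ℕ) + 1) + (X i : MvPolynomial (Fin n) ℝ).totalDegree :=
                Nat.add_le_add_right this _
            _ = (i : ℕ) + 2 := by rw [totalDegree_X]
      _ = _ := key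
  · -- lower bound via evaluation into ℝ[t]
    set φ : MvPolynomial (Fin n) ℝ →ₐ[ℝ] Polynomial ℝ :=
      aeval (fun _ : Fin n => (Polynomial.X : Polynomial ℝ)) with hφ
    set q : Fin n → Polynomial ℝ := fun i =>
      Polynomial.C ((n : ℝ) ^ ((i : ℕ) + 1)) * Polynomial.X ^ ((i : ℕ) + 2)
        - Polynomial.X with hq
    have himg : ∀ i, φ (P i) = q i := by
      intro i
      have hSn : φ (∑ l, X l) = (n : Polynomial ℝ) * Polynomial.X := by
        simp [hφ, Finset.sum_const, Finset.card_univ, nsmul_eq_mul]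
      simp only [hP, hq, map_add, map_mul, map_sub, map_pow, map_one, hφ, aeval_X,
        Polynomial.C_eq_natCast]
      rw [show ((aeval fun _ : Fin n => (Polynomial.X : Polynomial ℝ)) (∑ l, X l))
          = (n : Polynomial ℝ) * Polynomial.X from hSn]
      ring
    have hpos : ∀ i : Fin n, (q i).natDegree = (i : ℕ) + 2 := by
      intro i
      have hc : ((n : ℝ) ^ ((i : ℕ) + 1)) ≠ 0 := by positivity
      have hCd : (Polynomial.C ((n : ℝ) ^ ((i : ℕ) + 1)) *
          Polynomial.X ^ ((i : ℕ) + 2)).natDegree = (i : ℕ) + 2 :=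
        Polynomial.natDegree_C_mul_X_pow _ _ hc
      rw [hq]
      rw [Polynomial.natDegree_sub_eq_left_of_natDegree_lt, hCd]
      rw [hCd, Polynomial.natDegree_X]; omega
    have hne : ∀ i ∈ Finset.univ, q i ≠ 0 := by
      intro i _ h
      have := hpos i
      rw [h, Polynomial.natDegree_zero] at this
      omega
    have hprod : (φ (∏ i, P i)).natDegree = ∑ i : Fin n, ((i : ℕ) + 2) := by
      rw [map_prod]
      rw [Finset.prod_congr rfl fun i _ => himg i]
      rw [Polynomial.natDegree_prod _ _ (fun i hi => hne i hi)]
      exact Finset.sum_congr rfl fun i _ => hpos i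
    have hle : (φ (∏ i, P i)).natDegree ≤ (∏ i, P i).totalDegree * 1 :=
      aeval_natDegree_le _ le_rfl _ fun _ => Polynomial.natDegree_X_le
    rw [mul_one] at hle
    rw [← key, ← hprod]
    exact hle
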